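/- Let D be an implication B → (f = v) where B is a conjunction of possibly negated atomic formulas, f is a ground term, and every variable occurring in D (including v) occurs in some non-negated conjunct of B of the form x = t or t = x, with the variable dependency graph of B acyclic. Then the substitution process that, while some variable x remains in D, selects a non-negated conjunct x = t or t = x in the body B such that no variable occurring in t depends on x and replaces D by D^x_t, terminates in a formula containing no variables, and the universal closure of D is logically equivalent to the resulting variable-free formula. -/

import Mathlib

/-!
A deep embedding of (one-sorted) first-order logic with equality,
following the functional stable model semantics of
Bartholomew & Lee, used by the ASPMT / aspsmt2smt paper.
-/

namespace ASPMT

/-- A first-order signature: function symbols and predicate symbols with arities. -/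
structure Signature where
  Func : Type
  Pred : Type
  funcAr : Func → ℕ
  predAr : Pred → ℕ

variable {σ : Signature}

/-- First-order terms; variables are indexed by natural numbers. -/
inductive Term (σ : Signature) : Type
  | var : ℕ → Term σ
  | app : (f : σ.Func) → (Fin (σ.funcAr f) → Term σ) → Term σ

/-- First-order formulas (with equality). `¬F` is `F.imp falsum`. -/
inductive Formula (σ : Signature) : Type
  | falsum : Formula σ
  | eq : Term σ → Term σ → Formula σ
  | pred : (p : σ.Pred) → (Fin (σ.predAr p) → Term σ) → Formula σ
  | and : Formula σ → Formula σ → Formula σ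
  | or : Formula σ → Formula σ → Formula σ
  | imp : Formula σ → Formula σ → Formula σ
  | all : ℕ → Formula σ → Formula σ
  | ex : ℕ → Formula σ → Formula σ

/-- Negation, as an abbreviation. -/
def Formula.not (F : Formula σ) : Formula σ := F.imp .falsum

/-- An interpretation (structure) for the signature, with nonempty universe. -/
structure Interp (σ : Signature) where
  M : Type
  nonempty : Nonempty M
  funcI : (f : σ.Func) → (Fin (σ.funcAr f) → M) → M
  predI : (p : σ.Pred) → (Fin (σ.predAr p) → M) → Prop

/-- Updating a variable assignment at a variable. -/
def updAssign {α : Type} (ν : ℕ → α) (x : ℕ) (a : α) : ℕ → α :=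
  fun y => if y = x then a else ν y

/-- Evaluation of a term in an interpretation under a variable assignment. -/
def Term.eval (I : Interp σ) (ν : ℕ → I.M) : Term σ → I.M
  | .var x => ν x
  | .app f ts => I.funcI f fun i => (ts i).eval I ν

/-- Tarskian satisfaction. -/
def Formula.Sat (I : Interp σ) : (ν : ℕ → I.M) → Formula σ → Prop
  | _, .falsum => False
  | ν, .eq t u => t.eval I ν = u.eval I ν
  | ν, .pred p ts => I.predI p fun i => (ts i).eval I ν
  | ν, .and F G => F.Sat I ν ∧ G.Sat I ν
  | ν, .or F G => F.Sat I ν ∨ G.Sat I ν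
  | ν, .imp F G => F.Sat I ν → G.Sat I ν
  | ν, .all x F => ∀ a : I.M, F.Sat I (updAssign ν x a)
  | ν, .ex x F => ∃ a : I.M, F.Sat I (updAssign ν x a)

/-- Variables occurring in a term. -/
def Term.vars : Term σ → Set ℕ
  | .var x => {x}
  | .app _ ts => ⋃ i, (ts i).vars

/-- Free variables of a formula. -/
def Formula.fv : Formula σ → Set ℕ
  | .falsum => ∅
  | .eq t u => t.vars ∪ u.vars
  | .pred _ ts => ⋃ i, (ts i).vars
  | .and F G => F.fv ∪ G.fv
  | .or F G => F.fv ∪ G.fv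
  | .imp F G => F.fv ∪ G.fv
  | .all x F => F.fv \ {x}
  | .ex x F => F.fv \ {x}

end ASPMT


namespace ASPMT

variable {σ : Signature}

/-- Substitution of a term `t` for a variable `x` in a term. -/
def Term.subst : Term σ → ℕ → Term σ → Term σ
  | .var y, x, t => if y = x then t else .var y
  | .app f ts, x, t => .app f fun i => (ts i).subst x t

/-- Atomic formulas. -/
inductive Atom (σ : Signature) : Type
  | eq : Term σ → Term σ → Atom σ
  | pred : (p : σ.Pred) → (Fin (σ.predAr p) → Term σ) → Atom σ

/-- A literal: an atomic formula, possibly preceded with `¬` (`pos = false`). -/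
structure Lit (σ : Signature) where
  atom : Atom σ
  pos : Bool

/-- A conjunction `C₁ ∧ … ∧ Cₙ` of possibly negated atomic formulas. -/
abbrev Conj (σ : Signature) := List (Lit σ)

/-- Variables occurring in an atomic formula. -/
def Atom.vars : Atom σ → Set ℕ
  | .eq t u => t.vars ∪ u.vars
  | .pred _ ts => ⋃ i, (ts i).vars

/-- Variables occurring in a literal. -/
def Lit.vars (l : Lit σ) : Set ℕ := l.atom.vars

/-- Variables occurring in a conjunction of literals. -/
def conjVars (L : Conj σ) : Set ℕ := {x | ∃ l ∈ L, x ∈ l.vars}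

/-- Substitution in an atomic formula. -/
def Atom.subst : Atom σ → ℕ → Term σ → Atom σ
  | .eq a b, x, t => .eq (a.subst x t) (b.subst x t)
  | .pred p ts, x, t => .pred p fun i => (ts i).subst x t

/-- Substitution in a literal. -/
def Lit.subst (l : Lit σ) (x : ℕ) (t : Term σ) : Lit σ := ⟨l.atom.subst x t, l.pos⟩

/-- `D^x_t`: the result of substituting `t` for every occurrence of the variable
`x` in the conjunction `D`. -/
def conjSubst (x : ℕ) (t : Term σ) (L : Conj σ) : Conj σ := L.map (Lit.subst · x t)

/-- The literal `l` is a non-negated conjunct of the form `x = t` or `t = x`. -/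
def isolator (x : ℕ) (l : Lit σ) : Prop :=
  l.pos = true ∧ ∃ t : Term σ, l.atom = .eq (.var x) t ∨ l.atom = .eq t (.var x)

/-- The edge relation of the variable dependency graph of a conjunction `L`:
there is an edge from `v` to `u` if some conjunct of `L` is `v = t` or `t = v`
for a term `t` in which `u` appears. -/
def depEdgeC (L : Conj σ) (v u : ℕ) : Prop :=
  ∃ l ∈ L, l.pos = true ∧ ∃ t : Term σ,
    (l.atom = .eq (.var v) t ∨ l.atom = .eq t (.var v)) ∧ u ∈ t.vars

/-- `v` depends on `u`: there is a directed path (of length ≥ 1) from `v` to `u`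
in the variable dependency graph of `L`. -/
def dependsOn (L : Conj σ) : ℕ → ℕ → Prop := Relation.TransGen (depEdgeC L)

/-- The variable dependency graph of `L` is acyclic. -/
def AcyclicDeps (L : Conj σ) : Prop := ∀ v, ¬ dependsOn L v v

/-- One step of the substitution process: select a variable `x` still occurring in
`L` and a non-negated conjunct `x = t` or `t = x` of `L` such that no variable
occurring in `t` depends on `x`, and replace `L` by `L^x_t`. -/
def SubstStep (L L' : Conj σ) : Prop :=
  ∃ x ∈ conjVars L, ∃ t : Term σ,
    (∃ l ∈ L, l.pos = true ∧ (l.atom = .eq (.var x) t ∨ l.atom = .eq t (.var x))) ∧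
    (∀ u ∈ t.vars, ¬ dependsOn L u x) ∧
    L' = conjSubst x t L

/-- Satisfaction of an atomic formula. -/
def Atom.SatA (I : Interp σ) (ν : ℕ → I.M) : Atom σ → Prop
  | .eq t u => t.eval I ν = u.eval I ν
  | .pred p ts => I.predI p fun i => (ts i).eval I ν

/-- Satisfaction of a literal. -/
def Lit.SatL (I : Interp σ) (ν : ℕ → I.M) (l : Lit σ) : Prop :=
  if l.pos then l.atom.SatA I ν else ¬ l.atom.SatA I ν

/-- Satisfaction of a conjunction of literals. -/
def SatConj (I : Interp σ) (ν : ℕ → I.M) (L : Conj σ) : Prop :=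
  ∀ l ∈ L, l.SatL I ν

end ASPMT


namespace ASPMT

variable {σ : Signature}

/-- The state of the substitution process on an implication `B → (f = u)`:
the body `B` together with the current value term `u` (initially the variable `v`);
the ground head term `f` is unaffected by substitutions. -/
abbrev State8 (σ : Signature) := Conj σ × Term σ

/-- Variables occurring in the implication `B → (f = u)` (with `f` ground). -/
def vars8 (S : State8 σ) : Set ℕ := conjVars S.1 ∪ S.2.vars

/-- One step of the substitution process on `D = (B → f = u)`: select a variable
`x` still occurring in `D` and a non-negated conjunct `x = t` or `t = x` in the
body `B` such that no variable occurring in `t` depends on `x`, and replace `D`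
by `D^x_t`. -/
def SubstStep8 (S S' : State8 σ) : Prop :=
  ∃ x ∈ vars8 S, ∃ t : Term σ,
    (∃ l ∈ S.1, l.pos = true ∧
      (l.atom = .eq (.var x) t ∨ l.atom = .eq t (.var x))) ∧
    (∀ u ∈ t.vars, ¬ dependsOn S.1 u x) ∧
    S' = (conjSubst x t S.1, S.2.subst x t)

end ASPMT

/-!
Each step eliminates the selected variable `x`: it does not occur in `t` (else `x` would depend on
itself) and the variables of `t` already occur in the body, so the finite set of variables of `D`
strictly shrinks and the process terminates. Every dependency of `B^x_t` is already one of `B`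
(this needs `t` not to be a variable, which acyclicity guarantees), so the invariant "every
variable of `D` has a defining equation in an acyclic body" persists; acyclicity also makes that
equation eligible, so the process stops only when `D` is ground. Under an assignment satisfying
`x = t`, substituting `t` for `x` changes nothing, hence each step preserves the truth of the
universal closure, and for ground `D` that truth does not depend on the assignment.
-/

namespace ASPMT

variable {σ : Signature}

section Substitution

lemma Term.mem_vars_subst {u x : ℕ} {t : Term σ} :
    ∀ {s : Term σ}, u ∈ (s.subst x t).vars → (u ∈ s.vars ∧ u ≠ x) ∨ (x ∈ s.vars ∧ u ∈ t.vars)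
  | .var y => by
    by_cases hy : y = x
    · subst hy
      simp only [Term.subst, if_pos, Term.vars, Set.mem_singleton_iff, true_and]
      exact Or.inr
    · simp only [Term.subst, if_neg hy, Term.vars, Set.mem_singleton_iff]
      rintro rfl
      exact Or.inl ⟨rfl, hy⟩
  | .app _ ts => by
    simp only [Term.subst, Term.vars, Set.mem_iUnion]
    rintro ⟨i, hi⟩
    rcases Term.mem_vars_subst hi with ⟨hu, hux⟩ | ⟨hx, hu⟩
    · exact Or.inl ⟨⟨i, hu⟩, hux⟩
    · exact Or.inr ⟨⟨i, hx⟩, hu⟩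

lemma Term.eq_var_of_subst_eq_var {x v : ℕ} {t : Term σ} (ht : ∀ w, t ≠ .var w) :
    ∀ {s : Term σ}, s.subst x t = .var v → s = .var v
  | .var y, h => by
    by_cases hy : y = x
    · simp only [Term.subst, if_pos hy] at h
      exact absurd h (ht v)
    · simpa only [Term.subst, if_neg hy] using h
  | .app _ _, h => by simp [Term.subst] at h

lemma Term.vars_finite : ∀ t : Term σ, t.vars.Finite
  | .var x => Set.finite_singleton x
  | .app _ ts => Set.finite_iUnion fun i => Term.vars_finite (ts i)

lemma updAssign_self {α : Type} (ν : ℕ → α) (x : ℕ) : updAssign ν x (ν x) = ν :=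
  funext fun y => by by_cases hy : y = x <;> simp [updAssign, hy]

lemma Term.eval_subst (I : Interp σ) (ν : ℕ → I.M) (x : ℕ) (t : Term σ) :
    ∀ s : Term σ, (s.subst x t).eval I ν = s.eval I (updAssign ν x (t.eval I ν))
  | .var y => by by_cases h : y = x <;> simp [Term.subst, Term.eval, updAssign, h]
  | .app _ ts => by
    simp only [Term.subst, Term.eval]
    exact congrArg _ (funext fun i => Term.eval_subst I ν x t (ts i))

lemma Term.eval_congr (I : Interp σ) {ν ν' : ℕ → I.M} :
    ∀ {s : Term σ}, (∀ y ∈ s.vars, ν y = ν' y) → s.eval I ν = s.eval I ν'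
  | .var y, h => h y rfl
  | .app _ ts, h => by
    simp only [Term.eval]
    exact congrArg _ <| funext fun i =>
      Term.eval_congr I fun y hy => h y (Set.mem_iUnion.mpr ⟨i, hy⟩)

lemma Term.eval_eq_of_vars_eq_empty (I : Interp σ) {s : Term σ} (hs : s.vars = ∅)
    (ν ν' : ℕ → I.M) : s.eval I ν = s.eval I ν' :=
  Term.eval_congr I fun y hy => absurd (hs ▸ hy) (Set.notMem_empty y)

lemma Atom.mem_vars_subst {a : Atom σ} {x u : ℕ} {t : Term σ}
    (h : u ∈ (a.subst x t).vars) : (u ∈ a.vars ∧ u ≠ x) ∨ u ∈ t.vars := by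
  cases a with
  | eq s₁ s₂ =>
    rcases h with h | h
    · rcases Term.mem_vars_subst h with ⟨hu, hux⟩ | ⟨_, hu⟩
      · exact Or.inl ⟨Or.inl hu, hux⟩
      · exact Or.inr hu
    · rcases Term.mem_vars_subst h with ⟨hu, hux⟩ | ⟨_, hu⟩
      · exact Or.inl ⟨Or.inr hu, hux⟩
      · exact Or.inr hu
  | pred _ ts =>
    obtain ⟨i, hi⟩ := Set.mem_iUnion.mp h
    rcases Term.mem_vars_subst hi with ⟨hu, hux⟩ | ⟨_, hu⟩
    · exact Or.inl ⟨Set.mem_iUnion.mpr ⟨i, hu⟩, hux⟩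
    · exact Or.inr hu

lemma Atom.vars_finite : ∀ a : Atom σ, a.vars.Finite
  | .eq s u => (Term.vars_finite s).union (Term.vars_finite u)
  | .pred _ ts => Set.finite_iUnion fun i => Term.vars_finite (ts i)

lemma Atom.satA_subst (I : Interp σ) (ν : ℕ → I.M) (x : ℕ) (t : Term σ) (a : Atom σ) :
    (a.subst x t).SatA I ν ↔ a.SatA I (updAssign ν x (t.eval I ν)) := by
  cases a <;> simp [Atom.subst, Atom.SatA, Term.eval_subst]

lemma Atom.satA_congr (I : Interp σ) {ν ν' : ℕ → I.M} {a : Atom σ}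
    (h : ∀ y ∈ a.vars, ν y = ν' y) : a.SatA I ν ↔ a.SatA I ν' := by
  cases a with
  | eq s₁ s₂ =>
    simp only [Atom.SatA]
    rw [Term.eval_congr I fun y hy => h y (Or.inl hy),
      Term.eval_congr I fun y hy => h y (Or.inr hy)]
  | pred p ts =>
    simp only [Atom.SatA]
    rw [funext fun i => Term.eval_congr I (s := ts i) fun y hy =>
      h y (Set.mem_iUnion.mpr ⟨i, hy⟩)]

lemma Lit.satL_subst (I : Interp σ) (ν : ℕ → I.M) (x : ℕ) (t : Term σ) (l : Lit σ) :
    (l.subst x t).SatL I ν ↔ l.SatL I (updAssign ν x (t.eval I ν)) := by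
  simp only [Lit.SatL, Lit.subst, Atom.satA_subst]

lemma conjVars_cons (l : Lit σ) (L : Conj σ) : conjVars (l :: L) = l.vars ∪ conjVars L := by
  ext x
  simp [conjVars]

lemma conjVars_finite : ∀ L : Conj σ, (conjVars L).Finite
  | [] => by simp [conjVars]
  | l :: L => conjVars_cons l L ▸ (Atom.vars_finite l.atom).union (conjVars_finite L)

lemma mem_conjVars_subst {L : Conj σ} {x u : ℕ} {t : Term σ}
    (h : u ∈ conjVars (conjSubst x t L)) : (u ∈ conjVars L ∧ u ≠ x) ∨ u ∈ t.vars := by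
  obtain ⟨_, hl', hu⟩ := h
  obtain ⟨l, hl, rfl⟩ := List.mem_map.mp hl'
  exact (Atom.mem_vars_subst hu).imp_left fun ⟨hu, hux⟩ => ⟨⟨l, hl, hu⟩, hux⟩

lemma satConj_subst (I : Interp σ) (ν : ℕ → I.M) (x : ℕ) (t : Term σ) (L : Conj σ) :
    SatConj I ν (conjSubst x t L) ↔ SatConj I (updAssign ν x (t.eval I ν)) L := by
  simp only [SatConj, conjSubst, List.forall_mem_map, Lit.satL_subst]

lemma satConj_congr (I : Interp σ) {ν ν' : ℕ → I.M} {L : Conj σ}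
    (h : ∀ y ∈ conjVars L, ν y = ν' y) : SatConj I ν L ↔ SatConj I ν' L := by
  refine forall₂_congr fun l hl => ?_
  simp only [Lit.SatL, Atom.satA_congr I fun y hy => h y ⟨l, hl, hy⟩]

end Substitution

section Dependencies

def HasPosEq (L : Conj σ) (x : ℕ) (t : Term σ) : Prop :=
  ∃ l ∈ L, l.pos = true ∧ (l.atom = .eq (.var x) t ∨ l.atom = .eq t (.var x))

variable {L : Conj σ} {x : ℕ} {t : Term σ}

lemma exists_isolator_iff : (∃ l ∈ L, isolator x l) ↔ ∃ t, HasPosEq L x t :=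
  ⟨fun ⟨l, hl, hp, t, ht⟩ => ⟨t, l, hl, hp, ht⟩, fun ⟨t, l, hl, hp, ht⟩ => ⟨l, hl, hp, t, ht⟩⟩

lemma HasPosEq.depEdgeC (h : HasPosEq L x t) {u : ℕ} (hu : u ∈ t.vars) : depEdgeC L x u :=
  let ⟨l, hl, hp, ht⟩ := h
  ⟨l, hl, hp, t, ht, hu⟩

lemma HasPosEq.vars_subset (h : HasPosEq L x t) : t.vars ⊆ conjVars L := by
  obtain ⟨l, hl, -, ht | ht⟩ := h <;> intro u hu <;> refine ⟨l, hl, ?_⟩ <;>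
    simp only [Lit.vars, ht, Atom.vars, Set.mem_union, hu, or_true, true_or]

lemma HasPosEq.eval_eq {I : Interp σ} {ν : ℕ → I.M} (h : HasPosEq L x t)
    (hsat : SatConj I ν L) : ν x = t.eval I ν := by
  obtain ⟨l, hl, hp, ht⟩ := h
  have hsl := hsat l hl
  simp only [Lit.SatL, hp, if_true] at hsl
  rcases ht with ht | ht <;> rw [ht] at hsl
  · exact hsl
  · exact hsl.symm

lemma HasPosEq.notMem_vars (h : HasPosEq L x t) (hdep : ∀ u ∈ t.vars, ¬ dependsOn L u x) :
    x ∉ t.vars :=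
  fun hx => hdep x hx (.single (h.depEdgeC hx))

lemma HasPosEq.ne_var (h : HasPosEq L x t) (hacyc : AcyclicDeps L) (w : ℕ) : t ≠ .var w := by
  rintro rfl
  have hsymm : HasPosEq L w (.var x) :=
    let ⟨l, hl, hp, ht⟩ := h
    ⟨l, hl, hp, ht.symm⟩
  exact hacyc x (.head (h.depEdgeC rfl) (.single (hsymm.depEdgeC rfl)))

lemma HasPosEq.subst {y : ℕ} {s : Term σ} (h : HasPosEq L y s) (hy : y ≠ x) :
    HasPosEq (conjSubst x t L) y (s.subst x t) := by
  obtain ⟨l, hl, hp, hs⟩ := h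
  refine ⟨l.subst x t, List.mem_map_of_mem hl, hp, ?_⟩
  simp only [Lit.subst]
  rcases hs with hs | hs <;> rw [hs] <;> simp [Atom.subst, Term.subst, hy]

lemma HasPosEq.of_conjSubst (ht : ∀ w, t ≠ .var w) {v : ℕ} {s : Term σ}
    (h : HasPosEq (conjSubst x t L) v s) : ∃ s₀, HasPosEq L v s₀ ∧ s = s₀.subst x t := by
  obtain ⟨_, hl', hp, hs⟩ := h
  obtain ⟨l, hl, rfl⟩ := List.mem_map.mp hl'
  cases hA : l.atom with
  | pred => simp [Lit.subst, Atom.subst, hA] at hs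
  | eq a b =>
    simp only [Lit.subst, hA, Atom.subst, Atom.eq.injEq] at hs
    rcases hs with ⟨ha, rfl⟩ | ⟨rfl, hb⟩
    · exact ⟨b, ⟨l, hl, hp, .inl (Term.eq_var_of_subst_eq_var ht ha ▸ hA)⟩, rfl⟩
    · exact ⟨a, ⟨l, hl, hp, .inr (Term.eq_var_of_subst_eq_var ht hb ▸ hA)⟩, rfl⟩

lemma dependsOn_of_depEdgeC_conjSubst (hx : HasPosEq L x t) (ht : ∀ w, t ≠ .var w)
    {v u : ℕ} (h : depEdgeC (conjSubst x t L) v u) : dependsOn L v u := by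
  obtain ⟨l, hl, hp, s, hs, hu⟩ := h
  have hvs : HasPosEq (conjSubst x t L) v s := ⟨l, hl, hp, hs⟩
  obtain ⟨s₀, hs₀, rfl⟩ := hvs.of_conjSubst ht
  rcases Term.mem_vars_subst hu with ⟨hu, -⟩ | ⟨hxs, hu⟩
  · exact .single (hs₀.depEdgeC hu)
  · exact .head (hs₀.depEdgeC hxs) (.single (hx.depEdgeC hu))

lemma AcyclicDeps.conjSubst_of_hasPosEq (hacyc : AcyclicDeps L) (hx : HasPosEq L x t) :
    AcyclicDeps (conjSubst x t L) := fun w hw =>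
  hacyc w <| Relation.TransGen.lift' id
    (fun _ _ => dependsOn_of_depEdgeC_conjSubst hx (hx.ne_var hacyc)) _ _ hw

end Dependencies

section Termination

variable {S S' : State8 σ}

lemma vars8_finite (S : State8 σ) : (vars8 S).Finite :=
  (conjVars_finite S.1).union (Term.vars_finite S.2)

lemma vars8_subst_subset {x : ℕ} {t : Term σ} (hx : x ∉ t.vars) (ht : t.vars ⊆ conjVars S.1) :
    vars8 (conjSubst x t S.1, S.2.subst x t) ⊆ vars8 S \ {x} := by
  rintro u (hu | hu)
  · rcases mem_conjVars_subst hu with ⟨hu, hux⟩ | hu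
    · exact ⟨.inl hu, hux⟩
    · exact ⟨.inl (ht hu), fun h => hx (h ▸ hu)⟩
  · rcases Term.mem_vars_subst hu with ⟨hu, hux⟩ | ⟨-, hu⟩
    · exact ⟨.inr hu, hux⟩
    · exact ⟨.inl (ht hu), fun h => hx (h ▸ hu)⟩

lemma SubstStep8.ncard_vars8_lt (h : SubstStep8 S S') : (vars8 S').ncard < (vars8 S).ncard := by
  obtain ⟨x, hx, t, hxt : HasPosEq S.1 x t, hdep, rfl⟩ := h
  refine Set.ncard_lt_ncard ?_ (vars8_finite S)
  exact (vars8_subst_subset (hxt.notMem_vars hdep) hxt.vars_subset).trans_ssubset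
    (Set.sdiff_singleton_ssubset.mpr hx)

lemma not_exists_substStep8_seq : ¬ ∃ g : ℕ → State8 σ, ∀ n, SubstStep8 (g n) (g (n + 1)) := by
  rintro ⟨g, hg⟩
  obtain ⟨n, hn⟩ := WellFounded.not_rel_apply_succ (r := (· < ·)) fun n => (vars8 (g n)).ncard
  exact hn (hg n).ncard_vars8_lt

end Termination

section Invariant

variable {S S' : State8 σ}

def IsolatedAcyclic (S : State8 σ) : Prop :=
  (∀ x ∈ vars8 S, ∃ t, HasPosEq S.1 x t) ∧ AcyclicDeps S.1

lemma IsolatedAcyclic.substStep8 (hS : IsolatedAcyclic S) (h : SubstStep8 S S') :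
    IsolatedAcyclic S' := by
  obtain ⟨hiso, hacyc⟩ := hS
  obtain ⟨x, -, t, hxt : HasPosEq S.1 x t, hdep, rfl⟩ := h
  refine ⟨fun y hy => ?_, hacyc.conjSubst_of_hasPosEq hxt⟩
  obtain ⟨hyS, hyx⟩ := vars8_subst_subset (hxt.notMem_vars hdep) hxt.vars_subset hy
  obtain ⟨s, hs⟩ := hiso y hyS
  exact ⟨_, hs.subst hyx⟩

lemma IsolatedAcyclic.of_reflTransGen (hS : IsolatedAcyclic S)
    (h : Relation.ReflTransGen SubstStep8 S S') : IsolatedAcyclic S' := by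
  induction h with
  | refl => exact hS
  | tail _ hstep ih => exact ih.substStep8 hstep

lemma IsolatedAcyclic.exists_substStep8 (hS : IsolatedAcyclic S) (hne : vars8 S ≠ ∅) :
    ∃ S', SubstStep8 S S' := by
  obtain ⟨x, hx⟩ := Set.nonempty_iff_ne_empty.mpr hne
  obtain ⟨t, hxt⟩ := hS.1 x hx
  exact ⟨_, x, hx, t, hxt, fun u hu hux => hS.2 x (.head (hxt.depEdgeC hu) hux), rfl⟩

end Invariant

section Semantics

def SatClosure (I : Interp σ) (f : Term σ) (S : State8 σ) : Prop :=
  ∀ ν, SatConj I ν S.1 → f.eval I ν = S.2.eval I ν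

variable {S S' : State8 σ} (I : Interp σ) {f : Term σ}

lemma SubstStep8.satClosure_iff (hf : f.vars = ∅) (h : SubstStep8 S S') :
    SatClosure I f S ↔ SatClosure I f S' := by
  obtain ⟨x, -, t, hxt : HasPosEq S.1 x t, -, rfl⟩ := h
  refine ⟨fun H ν hsat => ?_, fun H ν hsat => ?_⟩
  · rw [satConj_subst] at hsat
    rw [Term.eval_subst, ← H _ hsat]
    exact Term.eval_eq_of_vars_eq_empty I hf _ _
  · have hupd : updAssign ν x (t.eval I ν) = ν := by
      rw [← hxt.eval_eq hsat, updAssign_self]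
    have := H ν (by rwa [satConj_subst, hupd])
    rwa [Term.eval_subst, hupd] at this

lemma satClosure_iff_of_reflTransGen (hf : f.vars = ∅)
    (h : Relation.ReflTransGen SubstStep8 S S') : SatClosure I f S ↔ SatClosure I f S' := by
  induction h with
  | refl => exact .rfl
  | tail _ hstep ih => exact ih.trans (hstep.satClosure_iff I hf)

lemma satClosure_iff_of_vars8_eq_empty (hf : f.vars = ∅) (hS : vars8 S = ∅) (ν' : ℕ → I.M) :
    SatClosure I f S ↔ (SatConj I ν' S.1 → f.eval I ν' = S.2.eval I ν') := by
  obtain ⟨hB, hu⟩ := Set.union_empty_iff.mp hS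
  refine ⟨fun H => H ν', fun H ν => ?_⟩
  rwa [satConj_congr I fun y hy => absurd (hB ▸ hy) (Set.notMem_empty y),
    Term.eval_eq_of_vars_eq_empty I hf ν ν', Term.eval_eq_of_vars_eq_empty I hu ν ν']

end Semantics

/-- Let `D` be an implication `B → (f = v)` where `B` is a conjunction
of possibly negated atomic formulas, `f` is a ground term, and every variable
occurring in `D` (including `v`) occurs in some non-negated conjunct of `B` of the
form `x = t` or `t = x`, with the variable dependency graph of `B` acyclic.  Then
the substitution process that, while some variable `x` remains in `D`, selects a
non-negated conjunct `x = t` or `t = x` in the body `B` such that no variable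
occurring in `t` depends on `x` and replaces `D` by `D^x_t`, terminates in a
formula containing no variables, and the universal closure of `D` is logically
equivalent to the resulting variable-free formula. -/
theorem subst_process_imp {σ : Signature}
    (f : Term σ) (hf : f.vars = ∅) (v : ℕ) (B : Conj σ)
    (hiso : ∀ x ∈ insert v (conjVars B), ∃ l ∈ B, isolator x l)
    (hacyc : AcyclicDeps B) :
    -- the process terminates: there is no infinite sequence of substitution steps
    (¬ ∃ g : ℕ → State8 σ, g 0 = (B, Term.var v) ∧
      ∀ n, SubstStep8 (g n) (g (n + 1))) ∧
    -- progress: as long as a variable remains, a substitution step applies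
    (∀ S, Relation.ReflTransGen SubstStep8 (B, Term.var v) S → vars8 S ≠ ∅ →
      ∃ S', SubstStep8 S S') ∧
    -- any variable-free result is logically equivalent to the ∀-closure of `D`
    (∀ S, Relation.ReflTransGen SubstStep8 (B, Term.var v) S → vars8 S = ∅ →
      ∀ (I : Interp σ) (ν' : ℕ → I.M),
        ((∀ ν : ℕ → I.M, SatConj I ν B → f.eval I ν = ν v) ↔
          (SatConj I ν' S.1 → f.eval I ν' = S.2.eval I ν'))) := by
  have hinit : IsolatedAcyclic (B, Term.var v) :=
    ⟨fun x hx => exists_isolator_iff.mp (hiso x (Set.union_singleton ▸ hx)), hacyc⟩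
  refine ⟨fun ⟨g, _, hg⟩ => not_exists_substStep8_seq ⟨g, hg⟩,
    fun S hS => (hinit.of_reflTransGen hS).exists_substStep8,
    fun S hS hvars I ν' => ?_⟩
  exact (satClosure_iff_of_reflTransGen I hf hS).trans
    (satClosure_iff_of_vars8_eq_empty I hf hvars ν')

end ASPMT
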